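/- arXiv:1007.1186 — 2 statements merged into one kernel-verified Lean document; each statement's English description precedes it below -/
import Mathlib

section
/- Let (X, d, μ) be a metric measure space of homogeneous type with finite diameter, and suppose μ is upper Ahlfors γ-regular: μ(B(x,r)) ≤ b r^γ for all x ∈ X and 0 < r < diam X, where b, γ > 0. Then there is a constant c > 0 depending only on b, γ and the doubling constant of μ (and not on p or λ) such that for every 1 < p < ∞ and every 0 ≤ λ < 1: ‖𝓜f‖_{L^{p,λ}} ≤ c ((p/(p−1))^{1/p} + 1) ‖f‖_{L^{p,λ}} for all measurable f, where 𝓜f(x) := sup_{0<r<diam X} r^{−γ} ∫_{B(x,r)} |f| dμ is the fractional-type maximal operator. -/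
open MeasureTheory Metric ENNReal Set

/-- The Morrey "norm" `‖g‖_{L^{p,λ}}` of an `ℝ≥0∞`-valued function `g`,
taken over balls of radius `0 < r < D`. -/
noncomputable def morreyNorm {X : Type*} [MetricSpace X] [MeasurableSpace X]
    (μ : Measure X) (D p lam : ℝ) (g : X → ℝ≥0∞) : ℝ≥0∞ :=
  ⨆ (x : X) (r : ℝ) (_ : 0 < r) (_ : r < D),
    (μ (ball x r) ^ (-lam) * ∫⁻ y in ball x r, g y ^ p ∂μ) ^ (1 / p)

/-- The fractional-type maximal function `𝓜f(x) = sup_{0<r<D} r^{-γ} ∫_{B(x,r)} |f| dμ`. -/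
noncomputable def fracMaximalFn {X : Type*} [MetricSpace X] [MeasurableSpace X]
    (μ : Measure X) (D γ : ℝ) (f : X → ℝ) (x : X) : ℝ≥0∞ :=
  ⨆ (r : ℝ) (_ : 0 < r) (_ : r < D),
    ENNReal.ofReal (r ^ (-γ)) * ∫⁻ y in ball x r, (‖f y‖₊ : ℝ≥0∞) ∂μ

/-!
Upper Ahlfors regularity gives `r ^ (-γ) ≤ b / μ(B(x, r))`, so `𝓜f ≤ b · Mf` with `M` the
Hardy–Littlewood maximal function over radii `< D`.

On a ball `B₀ = B(z, r₀)`, split the radii at `r₀`. Small radii only see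
`g = |f| 1_{B(z, 2 r₀)}`; the maximal function is bounded on `L^p` with norm
`≲ (p / (p - 1)) ^ (1 / p)` (weak type `(1, 1)` by Vitali covering, then the layer cake
formula), and `‖g‖_p ^ p ≲ μ(B₀) ^ λ ‖f‖ ^ p` by doubling; when `B(z, 2 r₀)` is too large
for the Morrey norm, this goes through a finite cover of `X` by balls of radius `D / 2`, which
exists because a doubling measure makes a bounded space totally bounded. For large radii,
Hölder's inequality and the Morrey norm bound the averages by
`μ(B(x, r)) ^ (-(1 - λ) / p) ‖f‖ ≤ C μ(B₀) ^ (-(1 - λ) / p) ‖f‖`, a constant whose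
`L^p(B₀)` norm is `C μ(B₀) ^ (λ / p) ‖f‖`.
-/

lemma lintegral_Ioi_rpow_eq_top {s : ℝ} (hs : -1 < s) :
    ∫⁻ t in Ioi (0 : ℝ), ENNReal.ofReal (t ^ s) = ⊤ := by
  have h_not_int : ¬ IntegrableOn (fun t : ℝ => t ^ s) (Ioi 1) := by
    rw [integrableOn_Ioi_rpow_iff one_pos]
    linarith
  have h_top : ∫⁻ t in Ioi (1 : ℝ), ENNReal.ofReal (t ^ s) = ⊤ := by
    by_contra h
    refine h_not_int ⟨(by fun_prop : Measurable fun t : ℝ => t ^ s).aestronglyMeasurable, ?_⟩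
    refine (hasFiniteIntegral_iff_ofReal ?_).2 (lt_top_iff_ne_top.2 h)
    filter_upwards [ae_restrict_mem measurableSet_Ioi] with t ht
    exact Real.rpow_nonneg (zero_le_one.trans (le_of_lt ht)) s
  exact top_unique (h_top ▸ lintegral_mono_set (Ioi_subset_Ioi zero_le_one))

lemma lintegral_Ioo_rpow {s a : ℝ} (hs : -1 < s) (ha : 0 ≤ a) :
    ∫⁻ t in Ioo (0 : ℝ) a, ENNReal.ofReal (t ^ s) =
      ENNReal.ofReal (a ^ (s + 1) / (s + 1)) := by
  have h_int : IntegrableOn (fun t : ℝ => t ^ s) (Ioo 0 a) := by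
    have := intervalIntegral.intervalIntegrable_rpow' hs (a := 0) (b := a)
    rw [intervalIntegrable_iff, uIoc_of_le ha] at this
    exact this.mono_set Ioo_subset_Ioc_self
  rw [← ofReal_integral_eq_lintegral_ofReal h_int, ← integral_Ioc_eq_integral_Ioo,
    ← intervalIntegral.integral_of_le ha, integral_rpow (Or.inl hs),
    Real.zero_rpow (by linarith), sub_zero]
  filter_upwards [ae_restrict_mem measurableSet_Ioo] with t ht
  exact Real.rpow_nonneg ht.1.le s

lemma ofReal_mul_lintegral_indicator_rpow {p : ℝ} (hp : 0 < p) (c : ℝ≥0∞) :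
    ENNReal.ofReal p * ∫⁻ t in Ioi (0 : ℝ),
      {t : ℝ | ENNReal.ofReal t < c}.indicator (fun t => ENNReal.ofReal (t ^ (p - 1))) t =
        c ^ p := by
  rw [lintegral_indicator (measurableSet_lt (by fun_prop) measurable_const),
    Measure.restrict_restrict (measurableSet_lt (by fun_prop) measurable_const)]
  rcases eq_or_ne c ⊤ with rfl | hc
  · simp only [ENNReal.ofReal_lt_top, ofPred_true, univ_inter,
      lintegral_Ioi_rpow_eq_top (by linarith : -1 < p - 1), top_rpow_of_pos hp]
    exact ENNReal.mul_top (ENNReal.ofReal_pos.2 hp).ne'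
  have h_set : {t : ℝ | ENNReal.ofReal t < c} ∩ Ioi 0 = Ioo 0 c.toReal := by
    ext t
    simp only [mem_inter_iff, mem_ofPred_eq, mem_Ioi, mem_Ioo]
    constructor
    · exact fun ⟨h, ht⟩ => ⟨ht, (ENNReal.ofReal_lt_iff_lt_toReal ht.le hc).1 h⟩
    · exact fun ⟨ht, h⟩ => ⟨(ENNReal.ofReal_lt_iff_lt_toReal ht.le hc).2 h, ht⟩
  rw [h_set, lintegral_Ioo_rpow (by linarith) toReal_nonneg, sub_add_cancel,
    ← ENNReal.ofReal_mul hp.le, mul_div_cancel₀ _ hp.ne',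
    ← ENNReal.ofReal_rpow_of_nonneg toReal_nonneg hp.le, ofReal_toReal hc]

lemma lintegral_rpow_eq_lintegral_meas_lt_mul_of_ennreal {α : Type*} [MeasurableSpace α]
    (μ : Measure α) [SFinite μ] {h : α → ℝ≥0∞} (hh : Measurable h) {p : ℝ}
    (hp : 0 < p) :
    ∫⁻ x, h x ^ p ∂μ = ENNReal.ofReal p *
      ∫⁻ t in Ioi 0, μ {x | ENNReal.ofReal t < h x} * ENNReal.ofReal (t ^ (p - 1)) := by
  set F : α × ℝ → ℝ≥0∞ :=
    {q | ENNReal.ofReal q.2 < h q.1}.indicator fun q => ENNReal.ofReal (q.2 ^ (p - 1))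
  have hF : Measurable F :=
    (by fun_prop : Measurable fun q : α × ℝ => ENNReal.ofReal (q.2 ^ (p - 1))).indicator
      (measurableSet_lt (by fun_prop) (hh.comp measurable_fst))
  have h_slice (t : ℝ) :
      μ {x | ENNReal.ofReal t < h x} * ENNReal.ofReal (t ^ (p - 1)) =
        ∫⁻ x, F (x, t) ∂μ := by
    rw [mul_comm, ← lintegral_indicator_const (measurableSet_lt measurable_const hh)]
    rfl
  simp_rw [h_slice]
  rw [← lintegral_lintegral_swap (f := fun x t => F (x, t)) hF.aemeasurable,
    ← lintegral_const_mul' _ _ ofReal_ne_top]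
  congr 1 with x
  rw [← ofReal_mul_lintegral_indicator_rpow hp (h x)]
  rfl

lemma ENNReal.rpow_le_self_of_one_le {a : ℝ≥0∞} {t : ℝ} (ha : 1 ≤ a) (ht : t ≤ 1) :
    a ^ t ≤ a := by
  simpa using ENNReal.rpow_le_rpow_of_exponent_le ha ht

lemma setLIntegral_le_rpow_mul_measure_rpow {X : Type*} [MeasurableSpace X] {μ : Measure X}
    {p : ℝ} (hp : 1 < p) {g : X → ℝ≥0∞} (hg : AEMeasurable g μ) (s : Set X) :
    ∫⁻ y in s, g y ∂μ ≤ (∫⁻ y in s, g y ^ p ∂μ) ^ (1 / p) * μ s ^ (1 - 1 / p) := by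
  have h := ENNReal.lintegral_mul_le_Lp_mul_Lq (μ.restrict s) (.conjExponent hp) hg.restrict
    (aemeasurable_const (b := (1 : ℝ≥0∞)))
  have h_exp : 1 / p.conjExponent = 1 - 1 / p := by
    rw [Real.conjExponent, one_div_div]
    field_simp
  simpa [h_exp] using h

lemma rpow_setLIntegral_rpow_le_of_le_mul_add {X : Type*} [MeasurableSpace X] {μ : Measure X}
    {p : ℝ} (hp : 1 ≤ p) {u F : X → ℝ≥0∞} (hF : Measurable F) {s : Set X}
    (hs : MeasurableSet s) {A c : ℝ≥0∞} (hle : ∀ x ∈ s, u x ≤ A * (F x + c)) :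
    (∫⁻ x in s, u x ^ p ∂μ) ^ (1 / p) ≤
      A * ((∫⁻ x, F x ^ p ∂μ) ^ (1 / p) + c * μ s ^ (1 / p)) := by
  have hp0 : 0 < p := by linarith
  have h_inv : 0 ≤ 1 / p := by positivity
  have h_cancel (a : ℝ≥0∞) : (a ^ p) ^ (1 / p) = a := by
    rw [← ENNReal.rpow_mul, mul_one_div_cancel hp0.ne', ENNReal.rpow_one]
  calc (∫⁻ x in s, u x ^ p ∂μ) ^ (1 / p)
      ≤ (∫⁻ x in s, A ^ p * (F x + c) ^ p ∂μ) ^ (1 / p) := by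
        refine ENNReal.rpow_le_rpow (setLIntegral_mono' hs fun x hx => ?_) h_inv
        rw [← ENNReal.mul_rpow_of_nonneg _ _ hp0.le]
        exact ENNReal.rpow_le_rpow (hle x hx) hp0.le
    _ = A * (∫⁻ x in s, (F + fun _ => c : X → ℝ≥0∞) x ^ p ∂μ) ^ (1 / p) := by
        rw [lintegral_const_mul _ ((hF.add_const c).pow_const p),
          ENNReal.mul_rpow_of_nonneg _ _ h_inv, h_cancel]
        rfl
    _ ≤ A * ((∫⁻ x in s, F x ^ p ∂μ) ^ (1 / p) + (∫⁻ _ in s, c ^ p ∂μ) ^ (1 / p)) :=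
        mul_le_mul_right (ENNReal.lintegral_Lp_add_le hF.aemeasurable aemeasurable_const hp) _
    _ ≤ A * ((∫⁻ x, F x ^ p ∂μ) ^ (1 / p) + c * μ s ^ (1 / p)) := by
        rw [setLIntegral_const, ENNReal.mul_rpow_of_nonneg _ _ h_inv, h_cancel]
        gcongr
        exact Measure.restrict_le_self

lemma ofReal_rpow_neg_mul_le_mul_setLAverage {X : Type*} [MeasurableSpace X] {μ : Measure X}
    {b γ r : ℝ} (hb : 0 < b) (hr : 0 < r) {s : Set X}
    (hs : μ s ≤ ENNReal.ofReal (b * r ^ γ)) (g : X → ℝ≥0∞) :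
    ENNReal.ofReal (r ^ (-γ)) * ∫⁻ y in s, g y ∂μ ≤
      ENNReal.ofReal b * ⨍⁻ y in s, g y ∂μ := by
  have h_eq : r ^ (-γ) = b / (b * r ^ γ) := by
    rw [Real.rpow_neg hr.le, ← div_div, div_self hb.ne', one_div]
  calc ENNReal.ofReal (r ^ (-γ)) * ∫⁻ y in s, g y ∂μ
      = ENNReal.ofReal b / ENNReal.ofReal (b * r ^ γ) * ∫⁻ y in s, g y ∂μ := by
        rw [h_eq, ENNReal.ofReal_div_of_pos (by positivity)]
    _ ≤ ENNReal.ofReal b / μ s * ∫⁻ y in s, g y ∂μ :=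
        mul_le_mul_left (ENNReal.div_le_div_left hs _) _
    _ = ENNReal.ofReal b * ⨍⁻ y in s, g y ∂μ := by
        rw [setLAverage_eq, div_eq_mul_inv, div_eq_mul_inv]
        ring

section Doubling

variable {X : Type*} [MetricSpace X] [MeasurableSpace X]

def IsDoublingOnBalls (μ : Measure X) (C : ℝ≥0∞) : Prop :=
  ∀ (x : X) (r : ℝ), 0 < r → μ (ball x (2 * r)) ≤ C * μ (ball x r)

namespace IsDoublingOnBalls

variable {μ : Measure X} {C : ℝ≥0∞}

lemma measure_ball_two_pow_mul_le (h : IsDoublingOnBalls μ C) (x : X) (k : ℕ) {r : ℝ}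
    (hr : 0 < r) : μ (ball x (2 ^ k * r)) ≤ C ^ k * μ (ball x r) := by
  induction k with
  | zero => simp
  | succ k ih =>
    calc μ (ball x (2 ^ (k + 1) * r)) = μ (ball x (2 * (2 ^ k * r))) := by ring_nf
      _ ≤ C * μ (ball x (2 ^ k * r)) := h x _ (by positivity)
      _ ≤ C * (C ^ k * μ (ball x r)) := by gcongr
      _ = C ^ (k + 1) * μ (ball x r) := by ring

lemma one_le [IsFiniteMeasure μ] [μ.IsOpenPosMeasure] [Nonempty X]
    (h : IsDoublingOnBalls μ C) : 1 ≤ C := by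
  obtain ⟨x⟩ := ‹Nonempty X›
  have h_le : 1 * μ (ball x 1) ≤ C * μ (ball x 1) := by
    rw [one_mul]
    exact (measure_mono (ball_subset_ball (by norm_num))).trans (h x 1 one_pos)
  exact (ENNReal.mul_le_mul_iff_left (measure_ball_pos μ x one_pos).ne'
    (measure_ne_top μ _)).1 h_le

end IsDoublingOnBalls

lemma Metric.IsSeparated.encard_mul_le [OpensMeasurableSpace X] {μ : Measure X} {K : ℝ≥0∞}
    {δ : NNReal} (hK : ∀ x, μ univ ≤ K * μ (ball x δ)) {s : Set X}
    (hs : IsSeparated ↑(2 * δ) s) :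
    s.encard * μ univ ≤ K * μ univ := by
  have h_disj : Pairwise (Function.onFun Disjoint fun x : s => ball (x : X) δ) := by
    intro x y hxy
    refine ball_disjoint_ball ?_
    have : ((2 * δ : NNReal) : ℝ≥0∞) < edist (x : X) y :=
      hs x.2 y.2 (Subtype.coe_injective.ne hxy)
    rw [edist_nndist, ENNReal.coe_lt_coe, ← NNReal.coe_lt_coe] at this
    push_cast at this
    linarith
  calc (s.encard : ℝ≥0∞) * μ univ = ∑' _ : s, μ univ := (ENNReal.tsum_const _).symm
    _ ≤ ∑' x : s, K * μ (ball (x : X) δ) := ENNReal.tsum_le_tsum fun x => hK x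
    _ = K * ∑' x : s, μ (ball (x : X) δ) := ENNReal.tsum_mul_left
    _ ≤ K * μ univ := by
      gcongr
      exact (tsum_meas_le_meas_iUnion_of_disjoint μ (fun _ => measurableSet_ball) h_disj).trans
        (measure_mono (subset_univ _))

theorem IsDoublingOnBalls.totallyBounded_univ [OpensMeasurableSpace X] {μ : Measure X}
    {C : ℝ≥0∞} [IsFiniteMeasure μ] [μ.IsOpenPosMeasure] (h : IsDoublingOnBalls μ C)
    (hC : C ≠ ⊤) (hX : Bornology.IsBounded (univ : Set X)) : TotallyBounded (univ : Set X) := by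
  rcases isEmpty_or_nonempty X with hX_empty | ⟨⟨x₀⟩⟩
  · simp [univ_eq_empty_iff.2 hX_empty]
  rw [Metric.totallyBounded_iff]
  intro ε hε
  obtain ⟨R, hR⟩ := Metric.isBounded_iff.1 hX
  set δ : NNReal := ⟨ε / 3, by positivity⟩
  have hδ : (δ : ℝ) = ε / 3 := rfl
  obtain ⟨k, hk⟩ := pow_unbounded_of_one_lt (R / (ε / 3)) one_lt_two
  have hK (x : X) : μ univ ≤ C ^ k * μ (ball x δ) := by
    refine (measure_mono fun y _ => ?_).trans
      (h.measure_ball_two_pow_mul_le x k (by rw [hδ]; positivity))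
    rw [mem_ball, hδ]
    have := (div_lt_iff₀ (by positivity : (0:ℝ) < ε / 3)).1 hk
    linarith [hR (mem_univ y) (mem_univ x)]
  have h_pos : μ univ ≠ 0 :=
    ((measure_ball_pos μ x₀ one_pos).trans_le (measure_mono (subset_univ _))).ne'
  obtain ⟨n, hn⟩ : ∃ n : ℕ, C ^ k ≤ n :=
    (ENNReal.exists_nat_gt (pow_ne_top hC)).imp fun _ => le_of_lt
  have h_packing : packingNumber (2 * δ) (univ : Set X) ≠ ⊤ := by
    refine ne_top_of_le_ne_top (ENat.natCast_ne_top n)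
      (iSup_le fun s => iSup_le fun _ => iSup_le fun hs => ?_)
    rw [← ENat.toENNReal_le]
    have := (ENNReal.mul_le_mul_iff_left h_pos (measure_ne_top μ _)).1 (hs.encard_mul_le hK)
    exact_mod_cast this.trans hn
  refine ⟨maximalSeparatedSet (2 * δ) univ, ?_, ?_⟩
  · rw [← encard_ne_top_iff, encard_maximalSeparatedSet h_packing]
    exact h_packing
  · refine (isCover_iff_subset_iUnion_closedBall.1
      (isCover_maximalSeparatedSet h_packing)).trans ?_
    refine iUnion₂_mono fun y _ => closedBall_subset_ball ?_
    rw [NNReal.coe_mul, hδ]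
    norm_num
    linarith

end Doubling

section LocalMaximal

variable {X : Type*} [MetricSpace X] [MeasurableSpace X] {μ : Measure X} {C : ℝ≥0∞}

lemma lowerSemicontinuous_measure_ball [OpensMeasurableSpace X] (μ : Measure X) (r : ℝ) :
    LowerSemicontinuous fun x => μ (ball x r) := by
  intro x c (hc : c < μ (ball x r))
  show ∀ᶠ x' in nhds x, c < μ (ball x' r)
  have h_mono : Monotone fun n : ℕ => ball x (r - 1 / (n + 1)) :=
    fun m n hmn => ball_subset_ball (by gcongr)
  have h_union : ⋃ n : ℕ, ball x (r - 1 / (n + 1)) = ball x r := by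
    ext y
    simp only [mem_iUnion, mem_ball]
    constructor
    · rintro ⟨n, hn⟩
      linarith [Nat.one_div_pos_of_nat (α := ℝ) (n := n)]
    · intro hy
      obtain ⟨n, hn⟩ := exists_nat_one_div_lt (sub_pos.2 hy)
      exact ⟨n, by linarith⟩
  rw [← h_union] at hc
  obtain ⟨n, hn⟩ := ((tendsto_measure_iUnion_atTop h_mono).eventually (lt_mem_nhds hc)).exists
  filter_upwards [ball_mem_nhds x (Nat.one_div_pos_of_nat (α := ℝ) (n := n))] with x' hx'
  refine hn.trans_le (measure_mono (ball_subset_ball' ?_))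
  rw [mem_ball, dist_comm] at hx'
  linarith

lemma measurable_setLIntegral_ball [OpensMeasurableSpace X] (g : X → ℝ≥0∞) (r : ℝ) :
    Measurable fun x => ∫⁻ y in ball x r, g y ∂μ := by
  simp_rw [← withDensity_apply _ measurableSet_ball]
  exact (lowerSemicontinuous_measure_ball _ r).measurable

/-- Radii are rational so that this is a countable supremum of measurable functions. -/
noncomputable def localMaximalFn (μ : Measure X) (R : ℝ) (g : X → ℝ≥0∞) (x : X) :
    ℝ≥0∞ :=
  ⨆ (q : ℚ) (_ : 0 < (q : ℝ)) (_ : (q : ℝ) < R), ⨍⁻ y in ball x q, g y ∂μ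

lemma measurable_localMaximalFn [OpensMeasurableSpace X] (g : X → ℝ≥0∞) (R : ℝ) :
    Measurable (localMaximalFn μ R g) := by
  refine Measurable.iSup fun q => Measurable.iSup fun _ => Measurable.iSup fun _ => ?_
  simp_rw [setLAverage_eq]
  exact (measurable_setLIntegral_ball g q).div
    (lowerSemicontinuous_measure_ball μ q).measurable

lemma IsDoublingOnBalls.setLAverage_ball_le_localMaximalFn [IsFiniteMeasure μ]
    [μ.IsOpenPosMeasure] (h : IsDoublingOnBalls μ C) (g : X → ℝ≥0∞) (x : X) {r R : ℝ}
    (hr : 0 < r) (hrR : r < R) :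
    ⨍⁻ y in ball x r, g y ∂μ ≤ C * localMaximalFn μ R g x := by
  obtain ⟨q, hrq, hqR⟩ := exists_rat_btwn (lt_min (by linarith : r < 2 * r) hrR)
  have hq : 0 < (q : ℝ) := hr.trans hrq
  have h_avg : ⨍⁻ y in ball x q, g y ∂μ ≤ localMaximalFn μ R g x :=
    le_iSup_of_le q <| le_iSup_of_le hq <| le_iSup_of_le (hqR.trans_le (min_le_right _ _)) le_rfl
  have hq0 := (measure_ball_pos μ x hq).ne'
  have hqtop := measure_ne_top μ (ball x q)
  rw [setLAverage_eq, ENNReal.div_le_iff (measure_ball_pos μ x hr).ne' (measure_ne_top μ _)]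
  calc ∫⁻ y in ball x r, g y ∂μ ≤ ∫⁻ y in ball x q, g y ∂μ :=
        lintegral_mono_set (ball_subset_ball hrq.le)
    _ = (⨍⁻ y in ball x q, g y ∂μ) * μ (ball x q) := by
        rw [setLAverage_eq, ENNReal.div_mul_cancel hq0 hqtop]
    _ ≤ localMaximalFn μ R g x * (C * μ (ball x r)) := mul_le_mul' h_avg
        ((measure_mono (ball_subset_ball (hqR.trans_le (min_le_left _ _)).le)).trans (h x r hr))
    _ = C * localMaximalFn μ R g x * μ (ball x r) := by ring

end LocalMaximal

lemma half_mul_measure_le_setLIntegral_indicator {α : Type*} [MeasurableSpace α]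
    {μ : Measure α} {g : α → ℝ≥0∞} {s : Set α} (h0 : μ s ≠ 0) (htop : μ s ≠ ⊤) {t : ℝ≥0∞}
    (hlt : t < ⨍⁻ y in s, g y ∂μ) :
    t / 2 * μ s ≤ ∫⁻ y in s, {y | t < 2 * g y}.indicator g y ∂μ := by
  set S := {y | t < 2 * g y}
  have h_split (y : α) : g y ≤ S.indicator g y + t / 2 := by
    by_cases hy : y ∈ S
    · simp [indicator_of_mem hy]
    · rw [indicator_of_notMem hy, zero_add, ENNReal.le_div_iff_mul_le (by simp) (by simp),
        mul_comm]
      exact not_lt.1 hy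
  refine ENNReal.le_of_add_le_add_right (b := t / 2 * μ s)
    (mul_ne_top (div_ne_top hlt.ne_top two_ne_zero) htop) ?_
  calc t / 2 * μ s + t / 2 * μ s = t * μ s := by rw [← add_mul, ENNReal.add_halves]
    _ ≤ ∫⁻ y in s, g y ∂μ := by
        rw [setLAverage_eq, ENNReal.lt_div_iff_mul_lt (Or.inl h0) (Or.inl htop)] at hlt
        exact hlt.le
    _ ≤ ∫⁻ y in s, (S.indicator g y + t / 2) ∂μ := lintegral_mono h_split
    _ = ∫⁻ y in s, S.indicator g y ∂μ + t / 2 * μ s := by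
        rw [lintegral_add_right _ measurable_const, setLIntegral_const, mul_comm]

section MaximalInequality

variable {X : Type*} [MetricSpace X] [MeasurableSpace X] [OpensMeasurableSpace X]
  {μ : Measure X} {C : ℝ≥0∞}

/-- Vitali covering: a disjoint subfamily of the balls, enlarged by the factor `2 ^ 3`,
covers `E`. -/
lemma IsDoublingOnBalls.mul_measure_le_of_forall_exists_ball [SFinite μ] [μ.IsOpenPosMeasure]
    (h : IsDoublingOnBalls μ C) {E : Set X} {f : X → ℝ≥0∞} {a : ℝ≥0∞} {R : ℝ}
    (hE : ∀ x ∈ E, ∃ r ∈ Ioo 0 R, a * μ (ball x r) ≤ ∫⁻ y in ball x r, f y ∂μ) :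
    a * μ E ≤ C ^ 3 * ∫⁻ y, f y ∂μ := by
  choose! ρ hρ hρ_mass using hE
  obtain ⟨u, hu, hu_disj, hu_cover⟩ :=
    Vitali.exists_disjoint_subfamily_covering_enlargement_closedBall
    E id ρ R (fun x hx => (hρ x hx).2.le) 4 (by norm_num)
  have hρ_pos (i : u) : 0 < ρ i := (hρ i (hu i.2)).1
  have h_disj : Pairwise (Function.onFun Disjoint fun i : u => ball (i : X) (ρ i)) :=
    fun i j hij => (hu_disj i.2 j.2 (Subtype.coe_injective.ne hij)).mono
      ball_subset_closedBall ball_subset_closedBall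
  have : Countable u := by
    have := Measure.countable_meas_pos_of_disjoint_iUnion (μ := μ)
      (fun _ => measurableSet_ball) h_disj
    simp only [measure_ball_pos μ _ (hρ_pos _), ofPred_true] at this
    exact countable_univ_iff.1 this
  have h_cover : E ⊆ ⋃ i : u, ball (i : X) (2 ^ 3 * ρ i) := by
    intro x hx
    obtain ⟨i, hi, hxi⟩ := hu_cover x hx
    refine mem_iUnion.2 ⟨⟨i, hi⟩,
      closedBall_subset_ball ?_ (hxi (mem_closedBall_self (hρ x hx).1.le))⟩
    linarith [hρ_pos ⟨i, hi⟩]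
  calc a * μ E ≤ a * ∑' i : u, μ (ball (i : X) (2 ^ 3 * ρ i)) := by
        gcongr
        exact (measure_mono h_cover).trans (measure_iUnion_le _)
    _ ≤ ∑' i : u, C ^ 3 * (a * μ (ball (i : X) (ρ i))) := by
        rw [← ENNReal.tsum_mul_left]
        refine ENNReal.tsum_le_tsum fun i => ?_
        calc a * μ (ball (i : X) (2 ^ 3 * ρ i)) ≤ a * (C ^ 3 * μ (ball (i : X) (ρ i))) := by
              gcongr
              exact h.measure_ball_two_pow_mul_le _ 3 (hρ_pos i)
          _ = C ^ 3 * (a * μ (ball (i : X) (ρ i))) := by ring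
    _ ≤ C ^ 3 * ∑' i : u, ∫⁻ y in ball (i : X) (ρ i), f y ∂μ := by
        rw [ENNReal.tsum_mul_left]
        exact mul_le_mul_right (ENNReal.tsum_le_tsum fun i : u => hρ_mass i (hu i.2)) _
    _ ≤ C ^ 3 * ∫⁻ y, f y ∂μ := by
        rw [← lintegral_iUnion (fun _ => measurableSet_ball) h_disj]
        exact mul_le_mul_right (setLIntegral_le_lintegral _ _) _

/-- The weak type `(1, 1)` inequality, sharpened so that only the values `g > t / 2`
contribute. -/
lemma IsDoublingOnBalls.mul_measure_lt_localMaximalFn_le [IsFiniteMeasure μ]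
    [μ.IsOpenPosMeasure] (h : IsDoublingOnBalls μ C) {g : X → ℝ≥0∞} (hg : Measurable g)
    (R : ℝ) (t : ℝ≥0∞) :
    t * μ {x | t < localMaximalFn μ R g x} ≤
      2 * C ^ 3 * ∫⁻ y in {y | t < 2 * g y}, g y ∂μ := by
  have h_ball : ∀ x ∈ {x | t < localMaximalFn μ R g x}, ∃ r ∈ Ioo 0 R,
      t / 2 * μ (ball x r) ≤ ∫⁻ y in ball x r, {y | t < 2 * g y}.indicator g y ∂μ := by
    intro x hx
    obtain ⟨q, hq, hqR, hlt⟩ : ∃ q : ℚ, 0 < (q : ℝ) ∧ (q : ℝ) < R ∧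
        t < ⨍⁻ y in ball x q, g y ∂μ := by
      simpa only [mem_ofPred_eq, localMaximalFn, lt_iSup_iff, exists_prop] using hx
    exact ⟨q, ⟨hq, hqR⟩, half_mul_measure_le_setLIntegral_indicator
      (measure_ball_pos μ x hq).ne' (measure_ne_top μ _) hlt⟩
  calc t * μ {x | t < localMaximalFn μ R g x}
      = 2 * (t / 2 * μ {x | t < localMaximalFn μ R g x}) := by
        rw [← mul_assoc, ENNReal.mul_div_cancel two_ne_zero ofNat_ne_top]
    _ ≤ 2 * (C ^ 3 * ∫⁻ y, {y | t < 2 * g y}.indicator g y ∂μ) :=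
        mul_le_mul_right (h.mul_measure_le_of_forall_exists_ball h_ball) 2
    _ = 2 * C ^ 3 * ∫⁻ y in {y | t < 2 * g y}, g y ∂μ := by
        rw [lintegral_indicator (measurableSet_lt measurable_const (hg.const_mul 2)), mul_assoc]

/-- From the weak type bound, by the layer cake formula for `μ` and then for `g • μ`. -/
theorem IsDoublingOnBalls.lintegral_localMaximalFn_rpow_le [IsFiniteMeasure μ]
    [μ.IsOpenPosMeasure] (h : IsDoublingOnBalls μ C) {g : X → ℝ≥0∞} (hg : Measurable g)
    (R : ℝ) {p : ℝ} (hp : 1 < p) :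
    ∫⁻ x, localMaximalFn μ R g x ^ p ∂μ ≤
      2 ^ p * C ^ 3 * ENNReal.ofReal (p / (p - 1)) * ∫⁻ y, g y ^ p ∂μ := by
  set ν := μ.withDensity g
  have h2g : Measurable fun y => 2 * g y := hg.const_mul 2
  have h_weak (t : ℝ) (ht : t ∈ Ioi 0) :
      μ {x | ENNReal.ofReal t < localMaximalFn μ R g x} * ENNReal.ofReal (t ^ (p - 1)) ≤
        2 * C ^ 3 * (ν {y | ENNReal.ofReal t < 2 * g y} * ENNReal.ofReal (t ^ (p - 1 - 1))) := by
    have h_pow : t ^ (p - 1) = t * t ^ (p - 1 - 1) := by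
      rw [← Real.rpow_one_add' (le_of_lt ht) (by linarith), add_sub_cancel]
    rw [h_pow, ENNReal.ofReal_mul (le_of_lt ht), ← mul_assoc, mul_comm _ (ENNReal.ofReal t),
      withDensity_apply _ (measurableSet_lt measurable_const h2g), ← mul_assoc]
    exact mul_le_mul_left (h.mul_measure_lt_localMaximalFn_le hg R _) _
  have h_meas : Measurable fun t : ℝ =>
      ν {y | ENNReal.ofReal t < 2 * g y} * ENNReal.ofReal (t ^ (p - 1 - 1)) := by
    refine Measurable.mul (Antitone.measurable fun s t hst => measure_mono fun y hy => ?_)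
      (by fun_prop)
    exact (ENNReal.ofReal_le_ofReal hst).trans_lt hy
  calc ∫⁻ x, localMaximalFn μ R g x ^ p ∂μ
      = ENNReal.ofReal p * ∫⁻ t in Ioi 0,
          μ {x | ENNReal.ofReal t < localMaximalFn μ R g x} * ENNReal.ofReal (t ^ (p - 1)) :=
        lintegral_rpow_eq_lintegral_meas_lt_mul_of_ennreal μ (measurable_localMaximalFn g R)
          (by linarith)
    _ ≤ ENNReal.ofReal p * ∫⁻ t in Ioi 0,
          2 * C ^ 3 * (ν {y | ENNReal.ofReal t < 2 * g y} * ENNReal.ofReal (t ^ (p - 1 - 1))) := by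
        exact mul_le_mul_right (setLIntegral_mono' measurableSet_Ioi h_weak) _
    _ = 2 * C ^ 3 * ENNReal.ofReal (p / (p - 1)) * (ENNReal.ofReal (p - 1) * ∫⁻ t in Ioi 0,
          ν {y | ENNReal.ofReal t < 2 * g y} * ENNReal.ofReal (t ^ (p - 1 - 1))) := by
        have h_split :
            ENNReal.ofReal p = ENNReal.ofReal (p / (p - 1)) * ENNReal.ofReal (p - 1) := by
          rw [← ENNReal.ofReal_mul (by positivity),
            div_mul_cancel₀ _ (by linarith : p - 1 ≠ 0)]
        rw [lintegral_const_mul _ h_meas, h_split]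
        ring
    _ = 2 * C ^ 3 * ENNReal.ofReal (p / (p - 1)) * ∫⁻ y, (2 * g y) ^ (p - 1) ∂ν := by
        rw [lintegral_rpow_eq_lintegral_meas_lt_mul_of_ennreal ν h2g (by linarith)]
    _ = 2 ^ p * C ^ 3 * ENNReal.ofReal (p / (p - 1)) * ∫⁻ y, g y ^ p ∂μ := by
        have hp1 : 0 ≤ p - 1 := by linarith
        have h_mul (a : ℝ≥0∞) : a * a ^ (p - 1) = a ^ p := by
          conv_lhs => arg 1; rw [← ENNReal.rpow_one a]
          rw [← ENNReal.rpow_add_of_nonneg _ _ zero_le_one hp1, add_sub_cancel]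
        have h_pow (y : X) : g y * (2 * g y) ^ (p - 1) = 2 ^ (p - 1) * g y ^ p := by
          rw [ENNReal.mul_rpow_of_nonneg _ _ hp1, mul_left_comm, h_mul]
        rw [lintegral_withDensity_eq_lintegral_mul _ hg (h2g.pow_const _)]
        simp only [Pi.mul_apply, h_pow]
        rw [lintegral_const_mul _ (hg.pow_const _), ← h_mul 2]
        ring

end MaximalInequality

section Morrey

variable {X : Type*} [MetricSpace X] [MeasurableSpace X] {μ : Measure X} {C : ℝ≥0∞}
  {D p lam : ℝ}

lemma setLIntegral_rpow_le_morreyNorm (hp : 0 < p) (g : X → ℝ≥0∞) {z : X} {r : ℝ}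
    (hr : 0 < r) (hrD : r < D) (h0 : μ (ball z r) ≠ 0) (htop : μ (ball z r) ≠ ⊤) :
    ∫⁻ y in ball z r, g y ^ p ∂μ ≤ μ (ball z r) ^ lam * morreyNorm μ D p lam g ^ p := by
  have h_le : (μ (ball z r) ^ (-lam) * ∫⁻ y in ball z r, g y ^ p ∂μ) ^ (1 / p) ≤
      morreyNorm μ D p lam g :=
    le_iSup_of_le z <| le_iSup_of_le r <| le_iSup_of_le hr <| le_iSup_of_le hrD le_rfl
  rw [one_div, ENNReal.rpow_inv_le_iff hp] at h_le
  calc ∫⁻ y in ball z r, g y ^ p ∂μ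
      = μ (ball z r) ^ lam * (μ (ball z r) ^ (-lam) * ∫⁻ y in ball z r, g y ^ p ∂μ) := by
        rw [← mul_assoc, ← ENNReal.rpow_add _ _ h0 htop, add_neg_cancel, ENNReal.rpow_zero,
          one_mul]
    _ ≤ μ (ball z r) ^ lam * morreyNorm μ D p lam g ^ p := mul_le_mul_right h_le _

lemma setLAverage_ball_le_morreyNorm (hp : 1 < p) {g : X → ℝ≥0∞} (hg : AEMeasurable g μ)
    {z : X} {r : ℝ} (hr : 0 < r) (hrD : r < D) (h0 : μ (ball z r) ≠ 0)
    (htop : μ (ball z r) ≠ ⊤) :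
    ⨍⁻ y in ball z r, g y ∂μ ≤
      μ (ball z r) ^ (-((1 - lam) / p)) * morreyNorm μ D p lam g := by
  set m := μ (ball z r)
  set N := morreyNorm μ D p lam g
  have hp0 : 0 < p := by linarith
  calc ⨍⁻ y in ball z r, g y ∂μ = m ^ (-1 : ℝ) * ∫⁻ y in ball z r, g y ∂μ := by
        rw [setLAverage_eq, div_eq_mul_inv, mul_comm, ENNReal.rpow_neg_one]
    _ ≤ m ^ (-1 : ℝ) * ((m ^ lam * N ^ p) ^ (1 / p) * m ^ (1 - 1 / p)) := by
        refine mul_le_mul_right ((setLIntegral_le_rpow_mul_measure_rpow hp hg _).trans ?_) _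
        exact mul_le_mul_left (ENNReal.rpow_le_rpow
          (setLIntegral_rpow_le_morreyNorm hp0 g hr hrD h0 htop) (by positivity)) _
    _ = m ^ (-1 + lam * (1 / p) + (1 - 1 / p)) * N := by
        rw [ENNReal.mul_rpow_of_nonneg _ _ (by positivity), ← ENNReal.rpow_mul,
          ← ENNReal.rpow_mul,
          mul_one_div_cancel hp0.ne', ENNReal.rpow_one, ENNReal.rpow_add _ _ h0 htop,
          ENNReal.rpow_add _ _ h0 htop]
        ring
    _ = m ^ (-((1 - lam) / p)) * N := by
        congr 2
        ring

variable [IsFiniteMeasure μ] [μ.IsOpenPosMeasure]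

lemma IsDoublingOnBalls.measure_ball_rpow_neg_le (h : IsDoublingOnBalls μ C) {κ : ℝ}
    (hκ0 : 0 ≤ κ) (hκ1 : κ ≤ 1) {x z : X} {r₀ r : ℝ} (hx : x ∈ ball z r₀)
    (hr : r₀ ≤ r) :
    μ (ball x r) ^ (-κ) ≤ C * μ (ball z r₀) ^ (-κ) := by
  have hr₀ : 0 < r₀ := pos_of_mem_ball hx
  have hC : 1 ≤ C := haveI : Nonempty X := ⟨x⟩; h.one_le
  have h_mass : μ (ball z r₀) ≤ C * μ (ball x r) := by
    refine (measure_mono fun y hy => ?_).trans (h x r (hr₀.trans_le hr))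
    rw [mem_ball] at hx hy ⊢
    linarith [dist_triangle y z x, dist_comm x z]
  have hx0 := (measure_ball_pos μ x (hr₀.trans_le hr)).ne'
  have hz0 := (measure_ball_pos μ z hr₀).ne'
  rw [ENNReal.rpow_neg, ENNReal.rpow_neg, ← div_eq_mul_inv, ENNReal.le_div_iff_mul_le
    (Or.inl (ENNReal.rpow_pos (pos_iff_ne_zero.2 hz0) (measure_ne_top μ _)).ne')
    (Or.inl (ENNReal.rpow_ne_top_of_nonneg hκ0 (measure_ne_top μ _))), mul_comm,
    ← div_eq_mul_inv,
    ENNReal.div_le_iff (ENNReal.rpow_pos (pos_iff_ne_zero.2 hx0) (measure_ne_top μ _)).ne'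
    (ENNReal.rpow_ne_top_of_nonneg hκ0 (measure_ne_top μ _))]
  calc μ (ball z r₀) ^ κ ≤ (C * μ (ball x r)) ^ κ := ENNReal.rpow_le_rpow h_mass hκ0
    _ = C ^ κ * μ (ball x r) ^ κ := ENNReal.mul_rpow_of_nonneg _ _ hκ0
    _ ≤ C * μ (ball x r) ^ κ := mul_le_mul_left (ENNReal.rpow_le_self_of_one_le hC hκ1) _

lemma lintegral_rpow_le_encard_mul_morreyNorm {s : Set X} (hs : s.Countable)
    (hs_cover : univ ⊆ ⋃ w ∈ s, ball w (D / 2)) (hD : 0 < D) (hp : 0 < p) (hlam0 : 0 ≤ lam)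
    (g : X → ℝ≥0∞) :
    ∫⁻ y, g y ^ p ∂μ ≤ s.encard * (μ univ ^ lam * morreyNorm μ D p lam g ^ p) := by
  have : Countable s := hs.to_subtype
  calc ∫⁻ y, g y ^ p ∂μ ≤ ∫⁻ y in ⋃ w : s, ball (w : X) (D / 2), g y ^ p ∂μ := by
        rw [← setLIntegral_univ]
        exact lintegral_mono_set
          (hs_cover.trans (biUnion_eq_iUnion s fun w _ => ball w (D / 2)).subset)
    _ ≤ ∑' w : s, ∫⁻ y in ball (w : X) (D / 2), g y ^ p ∂μ := lintegral_iUnion_le _ _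
    _ ≤ ∑' _ : s, μ univ ^ lam * morreyNorm μ D p lam g ^ p := ENNReal.tsum_le_tsum fun w =>
        (setLIntegral_rpow_le_morreyNorm hp g (by linarith) (by linarith)
          (measure_ball_pos μ _ (by linarith)).ne' (measure_ne_top μ _)).trans
        (mul_le_mul_left (ENNReal.rpow_le_rpow (measure_mono (subset_univ _)) hlam0) _)
    _ = s.encard * (μ univ ^ lam * morreyNorm μ D p lam g ^ p) := ENNReal.tsum_const _

lemma setLIntegral_ball_two_mul_rpow_le [OpensMeasurableSpace X] (h : IsDoublingOnBalls μ C)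
    (hdist : ∀ x y : X, dist x y ≤ D) {s : Set X} (hs : s.Countable)
    (hs_cover : univ ⊆ ⋃ w ∈ s, ball w (D / 2)) (hp : 0 < p) (hlam0 : 0 ≤ lam)
    (hlam1 : lam ≤ 1) (g : X → ℝ≥0∞) {z : X} {r : ℝ} (hr : 0 < r) (hrD : r < D) :
    ∫⁻ y in ball z (2 * r), g y ^ p ∂μ ≤
      (C + s.encard * C ^ 2) * (μ (ball z r) ^ lam * morreyNorm μ D p lam g ^ p) := by
  have hC : 1 ≤ C := haveI : Nonempty X := ⟨z⟩; h.one_le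
  set N := morreyNorm μ D p lam g
  rcases lt_or_ge (2 * r) D with h2r | h2r
  · calc ∫⁻ y in ball z (2 * r), g y ^ p ∂μ ≤ μ (ball z (2 * r)) ^ lam * N ^ p :=
          setLIntegral_rpow_le_morreyNorm hp g (by positivity) h2r
            (measure_ball_pos μ z (by positivity)).ne' (measure_ne_top μ _)
      _ ≤ (C * μ (ball z r)) ^ lam * N ^ p :=
          mul_le_mul_left (ENNReal.rpow_le_rpow (h z r hr) hlam0) _
      _ ≤ C * (μ (ball z r) ^ lam * N ^ p) := by
          rw [ENNReal.mul_rpow_of_nonneg _ _ hlam0, mul_assoc]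
          exact mul_le_mul_left (ENNReal.rpow_le_self_of_one_le hC hlam1) _
      _ ≤ _ := mul_le_mul_left le_self_add _
  · have h_univ : μ univ ≤ C ^ 2 * μ (ball z r) :=
      (measure_mono fun y _ => by rw [mem_ball]; linarith [hdist y z]).trans
        (h.measure_ball_two_pow_mul_le z 2 hr)
    calc ∫⁻ y in ball z (2 * r), g y ^ p ∂μ ≤ ∫⁻ y, g y ^ p ∂μ := setLIntegral_le_lintegral _ _
      _ ≤ s.encard * (μ univ ^ lam * N ^ p) :=
          lintegral_rpow_le_encard_mul_morreyNorm hs hs_cover (hr.trans hrD) hp hlam0 g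
      _ ≤ s.encard * (C ^ 2 * (μ (ball z r) ^ lam * N ^ p)) := by
          refine mul_le_mul_right ?_ _
          rw [← mul_assoc]
          refine mul_le_mul_left ?_ _
          calc μ univ ^ lam ≤ (C ^ 2 * μ (ball z r)) ^ lam := ENNReal.rpow_le_rpow h_univ hlam0
            _ = (C ^ 2) ^ lam * μ (ball z r) ^ lam := ENNReal.mul_rpow_of_nonneg _ _ hlam0
            _ ≤ C ^ 2 * μ (ball z r) ^ lam := mul_le_mul_left
                (ENNReal.rpow_le_self_of_one_le (one_le_pow₀ hC) hlam1) _
      _ ≤ _ := by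
          rw [← mul_assoc]
          exact mul_le_mul_left le_add_self _

lemma IsDoublingOnBalls.fracMaximalFn_le [OpensMeasurableSpace X] (h : IsDoublingOnBalls μ C)
    {b γ : ℝ} (hb : 0 < b)
    (hAhlfors : ∀ (x : X) (r : ℝ), 0 < r → r < D →
      μ (ball x r) ≤ ENNReal.ofReal (b * r ^ γ))
    (hp : 1 < p) (hlam0 : 0 ≤ lam) (hlam1 : lam ≤ 1) {f : X → ℝ} (hf : Measurable f)
    {z x : X} {r₀ : ℝ} (hx : x ∈ ball z r₀) :
    fracMaximalFn μ D γ f x ≤ ENNReal.ofReal b * C *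
      (localMaximalFn μ r₀ ((ball z (2 * r₀)).indicator fun y => (‖f y‖₊ : ℝ≥0∞)) x
        + μ (ball z r₀) ^ (-((1 - lam) / p)) * morreyNorm μ D p lam fun y => (‖f y‖₊ : ℝ≥0∞)) := by
  set φ : X → ℝ≥0∞ := fun y => ‖f y‖₊
  refine iSup_le fun r => iSup_le fun hr => iSup_le fun hrD => ?_
  refine (ofReal_rpow_neg_mul_le_mul_setLAverage hb hr (hAhlfors x r hr hrD) φ).trans ?_
  rw [mul_assoc]
  refine mul_le_mul_right ?_ _
  rcases lt_or_ge r r₀ with hrr₀ | hrr₀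
  · have h_sub : ball x r ⊆ ball z (2 * r₀) := fun y hy => by
      rw [mem_ball] at hx hy ⊢
      linarith [dist_triangle y x z]
    calc ⨍⁻ y in ball x r, φ y ∂μ
        = ⨍⁻ y in ball x r, (ball z (2 * r₀)).indicator φ y ∂μ :=
          setLAverage_congr_fun measurableSet_ball fun y hy => (indicator_of_mem (h_sub hy) φ).symm
      _ ≤ C * localMaximalFn μ r₀ ((ball z (2 * r₀)).indicator φ) x :=
          h.setLAverage_ball_le_localMaximalFn _ x hr hrr₀
      _ ≤ _ := mul_le_mul_right le_self_add _
  · have hκ0 : 0 ≤ (1 - lam) / p := div_nonneg (by linarith) (by linarith)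
    have hκ1 : (1 - lam) / p ≤ 1 := by
      rw [div_le_one (by linarith)]
      linarith
    calc ⨍⁻ y in ball x r, φ y ∂μ
        ≤ μ (ball x r) ^ (-((1 - lam) / p)) * morreyNorm μ D p lam φ :=
          setLAverage_ball_le_morreyNorm hp hf.nnnorm.coe_nnreal_ennreal.aemeasurable hr hrD
            (measure_ball_pos μ x hr).ne' (measure_ne_top μ _)
      _ ≤ C * μ (ball z r₀) ^ (-((1 - lam) / p)) * morreyNorm μ D p lam φ :=
          mul_le_mul_left (h.measure_ball_rpow_neg_le hκ0 hκ1 hx hrr₀) _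
      _ ≤ _ := by
          rw [mul_assoc]
          exact mul_le_mul_right le_add_self _

lemma IsDoublingOnBalls.rpow_lintegral_localMaximalFn_indicator_le [OpensMeasurableSpace X]
    (h : IsDoublingOnBalls μ C) (hdist : ∀ x y : X, dist x y ≤ D) {s : Set X}
    (hs : s.Countable) (hs_cover : univ ⊆ ⋃ w ∈ s, ball w (D / 2)) (hp : 1 < p)
    (hlam0 : 0 ≤ lam) (hlam1 : lam ≤ 1) {g : X → ℝ≥0∞} (hg : Measurable g) {z : X}
    {r₀ : ℝ} (hr₀ : 0 < r₀) (hr₀D : r₀ < D) :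
    (∫⁻ x, localMaximalFn μ r₀ ((ball z (2 * r₀)).indicator g) x ^ p ∂μ) ^ (1 / p) ≤
      2 * C ^ 3 * (C + s.encard * C ^ 2) * ENNReal.ofReal ((p / (p - 1)) ^ (1 / p)) *
        (μ (ball z r₀) ^ (lam / p) * morreyNorm μ D p lam g) := by
  set K := C + s.encard * C ^ 2
  set N := morreyNorm μ D p lam g
  set m := μ (ball z r₀)
  have hp0 : 0 < p := by linarith
  have h_inv : 0 ≤ 1 / p := by positivity
  have h_inv1 : 1 / p ≤ 1 := by
    rw [div_le_one hp0]
    exact hp.le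
  have hC : 1 ≤ C := haveI : Nonempty X := ⟨z⟩; h.one_le
  have h_g : ∫⁻ y, (ball z (2 * r₀)).indicator g y ^ p ∂μ ≤ K * (m ^ lam * N ^ p) := by
    have h_ind : (fun y => (ball z (2 * r₀)).indicator g y ^ p) =
        (ball z (2 * r₀)).indicator fun y => g y ^ p := by
      ext y
      by_cases hy : y ∈ ball z (2 * r₀) <;> simp [hy, ENNReal.zero_rpow_of_pos hp0]
    rw [h_ind, lintegral_indicator measurableSet_ball]
    exact setLIntegral_ball_two_mul_rpow_le h hdist hs hs_cover hp0 hlam0 hlam1 g hr₀ hr₀D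
  calc (∫⁻ x, localMaximalFn μ r₀ ((ball z (2 * r₀)).indicator g) x ^ p ∂μ) ^ (1 / p)
      ≤ (2 ^ p * C ^ 3 * ENNReal.ofReal (p / (p - 1)) * (K * (m ^ lam * N ^ p))) ^ (1 / p) :=
        ENNReal.rpow_le_rpow ((h.lintegral_localMaximalFn_rpow_le
          (hg.indicator measurableSet_ball) r₀ hp).trans (mul_le_mul_right h_g _)) h_inv
    _ = 2 * (C ^ 3) ^ (1 / p) * K ^ (1 / p) * ENNReal.ofReal ((p / (p - 1)) ^ (1 / p)) *
          (m ^ (lam / p) * N) := by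
        simp only [ENNReal.mul_rpow_of_nonneg _ _ h_inv]
        rw [ENNReal.ofReal_rpow_of_nonneg (div_nonneg hp0.le (by linarith)) h_inv]
        simp only [← ENNReal.rpow_mul, mul_one_div_cancel hp0.ne', ENNReal.rpow_one,
          mul_one_div]
        ring
    _ ≤ 2 * C ^ 3 * K * ENNReal.ofReal ((p / (p - 1)) ^ (1 / p)) * (m ^ (lam / p) * N) := by
        gcongr
        · exact ENNReal.rpow_le_self_of_one_le (one_le_pow₀ hC) h_inv1
        · exact ENNReal.rpow_le_self_of_one_le (hC.trans le_self_add) h_inv1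

theorem IsDoublingOnBalls.morrey_ball_fracMaximalFn_le [OpensMeasurableSpace X]
    (h : IsDoublingOnBalls μ C) {b γ : ℝ} (hb : 0 < b)
    (hAhlfors : ∀ (x : X) (r : ℝ), 0 < r → r < D →
      μ (ball x r) ≤ ENNReal.ofReal (b * r ^ γ))
    (hdist : ∀ x y : X, dist x y ≤ D) {s : Set X} (hs : s.Countable)
    (hs_cover : univ ⊆ ⋃ w ∈ s, ball w (D / 2)) (hp : 1 < p) (hlam0 : 0 ≤ lam)
    (hlam1 : lam ≤ 1) {f : X → ℝ} (hf : Measurable f) {z : X} {r₀ : ℝ} (hr₀ : 0 < r₀)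
    (hr₀D : r₀ < D) :
    (μ (ball z r₀) ^ (-lam) * ∫⁻ x in ball z r₀, fracMaximalFn μ D γ f x ^ p ∂μ) ^
        (1 / p) ≤ ENNReal.ofReal b * C * (2 * C ^ 3 * (C + s.encard * C ^ 2) *
        ENNReal.ofReal ((p / (p - 1)) ^ (1 / p)) + 1) *
          morreyNorm μ D p lam fun y => (‖f y‖₊ : ℝ≥0∞) := by
  set φ : X → ℝ≥0∞ := fun y => ‖f y‖₊
  set N := morreyNorm μ D p lam φ
  set m := μ (ball z r₀)
  set T := 2 * C ^ 3 * (C + s.encard * C ^ 2) * ENNReal.ofReal ((p / (p - 1)) ^ (1 / p))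
  have hm0 : m ≠ 0 := (measure_ball_pos μ z hr₀).ne'
  have hmtop : m ≠ ⊤ := measure_ne_top μ _
  have h_local := h.rpow_lintegral_localMaximalFn_indicator_le hdist hs hs_cover hp hlam0 hlam1
    hf.nnnorm.coe_nnreal_ennreal (z := z) hr₀ hr₀D
  have h_split := rpow_setLIntegral_rpow_le_of_le_mul_add (μ := μ) hp.le
    (measurable_localMaximalFn _ r₀) (measurableSet_ball (x := z) (ε := r₀))
    fun x hx => h.fracMaximalFn_le hb hAhlfors hp hlam0 hlam1 hf hx
  calc (m ^ (-lam) * ∫⁻ x in ball z r₀, fracMaximalFn μ D γ f x ^ p ∂μ) ^ (1 / p)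
      = m ^ (-(lam / p)) *
          (∫⁻ x in ball z r₀, fracMaximalFn μ D γ f x ^ p ∂μ) ^ (1 / p) := by
        rw [ENNReal.mul_rpow_of_nonneg _ _ (by positivity), ← ENNReal.rpow_mul]
        congr 2
        ring
    _ ≤ m ^ (-(lam / p)) * (ENNReal.ofReal b * C *
          (T * (m ^ (lam / p) * N) + m ^ (-((1 - lam) / p)) * N * m ^ (1 / p))) :=
        mul_le_mul_right (h_split.trans (mul_le_mul_right (add_le_add h_local le_rfl) _)) _
    _ = ENNReal.ofReal b * C * (T * N * (m ^ (-(lam / p)) * m ^ (lam / p)) +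
          N * (m ^ (-(lam / p)) * m ^ (-((1 - lam) / p)) * m ^ (1 / p))) := by ring
    _ = ENNReal.ofReal b * C * (T + 1) * N := by
        rw [← ENNReal.rpow_add _ _ hm0 hmtop, ← ENNReal.rpow_add _ _ hm0 hmtop,
          ← ENNReal.rpow_add _ _ hm0 hmtop, show -(lam / p) + lam / p = 0 by ring,
          show -(lam / p) + -((1 - lam) / p) + 1 / p = 0 by ring, ENNReal.rpow_zero]
        ring

end Morrey

lemma ENNReal.mul_add_one_le_add_one_mul (a b : ℝ≥0∞) : a * b + 1 ≤ (a + 1) * (b + 1) :=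
  calc a * b + 1 ≤ (a + 1) * b + (a + 1) := add_le_add (mul_le_mul_left le_self_add _) le_add_self
    _ = (a + 1) * (b + 1) := by ring

lemma MeasureTheory.Measure.isOpenPosMeasure_of_measure_ball_pos {X : Type*} [PseudoMetricSpace X]
    [MeasurableSpace X] {μ : Measure X} (h : ∀ (x : X) (r : ℝ), 0 < r → 0 < μ (ball x r)) :
    μ.IsOpenPosMeasure :=
  ⟨fun U hU ⟨x, hx⟩ => by
    obtain ⟨r, hr, hsub⟩ := Metric.isOpen_iff.1 hU x hx
    exact ((h x r hr).trans_le (measure_mono hsub)).ne'⟩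

lemma nonempty_of_ediam_univ_ne_zero {X : Type*} [PseudoEMetricSpace X]
    (h : Metric.ediam (univ : Set X) ≠ 0) : Nonempty X := by
  contrapose! h
  rw [univ_eq_empty_iff.2 h, Metric.ediam_empty]

lemma isFiniteMeasure_of_dist_le {X : Type*} [PseudoMetricSpace X] [MeasurableSpace X]
    {μ : Measure X} {D : ℝ} (hdist : ∀ x y : X, dist x y ≤ D)
    (hball : ∀ x : X, μ (ball x (D + 1)) < ⊤) : IsFiniteMeasure μ := by
  rcases isEmpty_or_nonempty X with hX | ⟨⟨x⟩⟩
  · exact ⟨by simp [univ_eq_empty_iff.2 hX]⟩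
  · exact ⟨(measure_mono fun y _ => mem_ball.2 ((hdist y x).trans_lt (lt_add_one D))).trans_lt
      (hball x)⟩

theorem fracMaximal_bounded_morrey_general
    {X : Type*} [MetricSpace X] [MeasurableSpace X] [BorelSpace X]
    (μ : Measure X) (D : ℝ) (hD : 0 < D)
    (hdiam : EMetric.diam (Set.univ : Set X) = ENNReal.ofReal D)
    (hball : ∀ (x : X) (r : ℝ), 0 < r → 0 < μ (ball x r) ∧ μ (ball x r) < ⊤)
    (Cμ : ℝ≥0∞) (hCμ : Cμ < ⊤)
    (hdouble : ∀ (x : X) (r : ℝ), 0 < r → μ (ball x (2 * r)) ≤ Cμ * μ (ball x r))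
    (b γ : ℝ) (hb : 0 < b)
    (hAhlfors : ∀ (x : X) (r : ℝ), 0 < r → r < D →
      μ (ball x r) ≤ ENNReal.ofReal (b * r ^ γ)) :
    ∃ c : ℝ, 0 < c ∧ ∀ p lam : ℝ, 1 < p → 0 ≤ lam → lam < 1 →
      ∀ f : X → ℝ, Measurable f →
      morreyNorm μ D p lam (fracMaximalFn μ D γ f) ≤
        ENNReal.ofReal (c * ((p / (p - 1)) ^ (1 / p) + 1)) *
          morreyNorm μ D p lam (fun y => (‖f y‖₊ : ℝ≥0∞)) := by
  have hdist (x y : X) : dist x y ≤ D := (edist_le_ofReal hD.le).1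
    ((Metric.edist_le_ediam_of_mem (mem_univ x) (mem_univ y)).trans_eq hdiam)
  have : Nonempty X :=
    nonempty_of_ediam_univ_ne_zero (hdiam.trans_ne (ENNReal.ofReal_pos.2 hD).ne')
  have : IsFiniteMeasure μ := isFiniteMeasure_of_dist_le hdist fun x => (hball x _ (by linarith)).2
  have : μ.IsOpenPosMeasure := Measure.isOpenPosMeasure_of_measure_ball_pos fun x r hr =>
    (hball x r hr).1
  have h : IsDoublingOnBalls μ Cμ := hdouble
  obtain ⟨s, hs, hs_cover⟩ := Metric.totallyBounded_iff.1 (h.totallyBounded_univ hCμ.ne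
    (Metric.isBounded_iff.2 ⟨D, fun x _ y _ => hdist x y⟩)) (D / 2) (by positivity)
  set c : ℝ≥0∞ := ENNReal.ofReal b * Cμ * (2 * Cμ ^ 3 * (Cμ + s.encard * Cμ ^ 2) + 1)
  have hc_top : c ≠ ⊤ := by
    have : (s.encard : ℝ≥0∞) ≠ ⊤ := by simpa using hs.encard_lt_top.ne
    have := hCμ.ne
    finiteness
  have hc_zero : c ≠ 0 := by simp [c, hb, (zero_lt_one.trans_le h.one_le).ne']
  refine ⟨c.toReal, ENNReal.toReal_pos hc_zero hc_top, fun p lam hp hlam0 hlam1 f hf =>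
    iSup_le fun z => iSup_le fun r₀ => iSup_le fun hr₀ => iSup_le fun hr₀D => ?_⟩
  refine (h.morrey_ball_fracMaximalFn_le hb hAhlfors hdist hs.countable hs_cover hp hlam0
    hlam1.le hf hr₀ hr₀D).trans (mul_le_mul_left ?_ _)
  rw [ENNReal.ofReal_mul toReal_nonneg, ofReal_toReal hc_top,
    ENNReal.ofReal_add (by positivity) zero_le_one, ENNReal.ofReal_one]
  exact (mul_le_mul_right (ENNReal.mul_add_one_le_add_one_mul _ _) _).trans_eq
    (mul_assoc _ _ _).symm

/-- Boundedness of the fractional-type maximal operator `𝓜` in Morrey spaces,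
under upper Ahlfors `γ`-regularity of `μ`. -/
theorem fracMaximal_bounded_morrey
    {X : Type*} [MetricSpace X] [MeasurableSpace X] [BorelSpace X]
    (μ : Measure X) (D : ℝ) (hD : 0 < D)
    (hdiam : EMetric.diam (Set.univ : Set X) = ENNReal.ofReal D)
    (hball : ∀ (x : X) (r : ℝ), 0 < r → 0 < μ (ball x r) ∧ μ (ball x r) < ⊤)
    (Cμ : ℝ≥0∞) (hCμ : Cμ < ⊤)
    (hdouble : ∀ (x : X) (r : ℝ), 0 < r → μ (ball x (2 * r)) ≤ Cμ * μ (ball x r))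
    (b γ : ℝ) (hb : 0 < b) (hγ : 0 < γ)
    (hAhlfors : ∀ (x : X) (r : ℝ), 0 < r → r < D →
      μ (ball x r) ≤ ENNReal.ofReal (b * r ^ γ)) :
    ∃ c : ℝ, 0 < c ∧ ∀ p lam : ℝ, 1 < p → 0 ≤ lam → lam < 1 →
      ∀ f : X → ℝ, Measurable f →
      morreyNorm μ D p lam (fracMaximalFn μ D γ f) ≤
        ENNReal.ofReal (c * ((p / (p - 1)) ^ (1 / p) + 1)) *
          morreyNorm μ D p lam (fun y => (‖f y‖₊ : ℝ≥0∞)) :=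
  fracMaximal_bounded_morrey_general μ D hD hdiam hball Cμ hCμ hdouble b γ hb hAhlfors
end

section
/- Let (X, d, μ) be a metric measure space of homogeneous type with finite diameter D, with μ({x}) = 0 for every x ∈ X, with t ↦ μ(B(x,t)) continuous for every x ∈ X, and with B(x,R) \ B(x,r) ≠ ∅ for all x ∈ X and 0 < r < R < D. Let 1 < p < ∞, 0 ≤ λ < 1 and 0 < α < (1−λ)/p. Then there exist constants c > 0 (depending only on the doubling constant of μ) and C_α > 0 (depending only on α and the doubling constant of μ) such that for all x ∈ X and all measurable f with ‖f‖_{L^{p,λ}} < ∞: |T_α f(x)| ≤ c (C_α + p/(1−λ−αp)) (Mf(x))^{1 − pα/(1−λ)} ‖f‖_{L^{p,λ}}^{pα/(1−λ)} (a Hedberg-type pointwise estimate), where T_α f(x) := ∫_X f(y) μ(B(x, d(x,y)))^{α−1} dμ(y) and Mf(x) := sup_{0<r<D} μ(B(x,r))⁻¹ ∫_{B(x,r)} |f| dμ. -/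
open MeasureTheory Metric ENNReal Set

/-- The Hardy–Littlewood maximal function `Mf` over balls of radius `0 < r < D`. -/
noncomputable def maximalFn {X : Type*} [MetricSpace X] [MeasurableSpace X]
    (μ : Measure X) (D : ℝ) (f : X → ℝ) (x : X) : ℝ≥0∞ :=
  ⨆ (r : ℝ) (_ : 0 < r) (_ : r < D),
    (μ (ball x r))⁻¹ * ∫⁻ y in ball x r, (‖f y‖₊ : ℝ≥0∞) ∂μ

/-- The potential operator `T_α f(x) = ∫ f(y) μ(B(x,d(x,y)))^{α-1} dμ(y)`. -/
noncomputable def potentialT {X : Type*} [MetricSpace X] [MeasurableSpace X]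
    (μ : Measure X) (α : ℝ) (f : X → ℝ) (x : X) : ℝ :=
  ∫ y, f y * (μ (ball x (dist x y)) ^ (α - 1)).toReal ∂μ

/-!
Write `ν = |f| μ` and `φ y = μ (B(x, d(x,y)))`. The layer-cake identity
`a ^ (α - 1) = (1 - α) ∫_a^∞ s ^ (α - 2) ds` and Tonelli give
`|T_α f(x)| ≤ (1 - α) ∫_0^∞ s ^ (α - 2) ν {φ ≤ s} ds`.
Since `t ↦ μ (B(x,t))` is continuous, the sublevel set `{φ ≤ s}` is controlled by balls of
`μ`-measure close to `s`; the maximal function and (through Hölder's inequality) the Morrey norm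
then give `ν {φ ≤ s} ≤ min (Mf(x) s, ‖f‖_{L^{p,λ}} s ^ (1 - κ))` with `κ = (1 - λ) / p`.
Splitting the `s`-integral where the two bounds meet yields the estimate with `c = 1` and
`C_α = 1 / α`.
-/

theorem lintegral_Ioi_rpow_of_lt {β : ℝ} (hβ : β < -1) {t : ℝ} (ht : 0 < t) :
    ∫⁻ s in Ioi t, ENNReal.ofReal (s ^ β) = ENNReal.ofReal (t ^ (β + 1) / -(β + 1)) := by
  rw [div_neg, ← neg_div, ← integral_Ioi_rpow_of_lt hβ ht,
    ofReal_integral_eq_lintegral_ofReal (integrableOn_Ioi_rpow_of_lt hβ ht)]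
  filter_upwards [self_mem_ae_restrict measurableSet_Ioi] with s hs
  exact Real.rpow_nonneg (ht.trans hs).le β

theorem lintegral_Ioc_zero_rpow {β : ℝ} (hβ : -1 < β) {t : ℝ} (ht : 0 < t) :
    ∫⁻ s in Ioc 0 t, ENNReal.ofReal (s ^ β) = ENNReal.ofReal (t ^ (β + 1) / (β + 1)) := by
  have hint : IntegrableOn (fun s : ℝ => s ^ β) (Ioc 0 t) :=
    (intervalIntegrable_iff_integrableOn_Ioc_of_le ht.le).1
      (intervalIntegral.intervalIntegrable_rpow' hβ)
  rw [← ofReal_integral_eq_lintegral_ofReal hint, ← intervalIntegral.integral_of_le ht.le,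
    integral_rpow (Or.inl hβ), Real.zero_rpow (by linarith), sub_zero]
  filter_upwards [self_mem_ae_restrict measurableSet_Ioc] with s hs
  exact Real.rpow_nonneg hs.1.le β

theorem rpow_sub_one_eq_lintegral_indicator {α : ℝ} (hα : α < 1) {a : ℝ≥0∞} (ha : a ≠ 0)
    (ha' : a ≠ ⊤) :
    a ^ (α - 1) = ENNReal.ofReal (1 - α) * ∫⁻ s in Ioi 0,
      {s | a ≤ ENNReal.ofReal s}.indicator (fun s => ENNReal.ofReal (s ^ (α - 2))) s := by
  have ht : 0 < a.toReal := toReal_pos ha ha'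
  have hset : {s : ℝ | a ≤ ENNReal.ofReal s} ∩ Ioi 0 = Ici a.toReal := by
    ext s
    simp only [mem_inter_iff, mem_ofPred_eq, mem_Ioi, mem_Ici]
    constructor
    · rintro ⟨h, hs⟩
      exact toReal_le_of_le_ofReal hs.le h
    · intro h
      exact ⟨(le_ofReal_iff_toReal_le ha' (ht.le.trans h)).2 h, ht.trans_le h⟩
  rw [lintegral_indicator (measurableSet_le measurable_const ENNReal.measurable_ofReal),
    Measure.restrict_restrict (measurableSet_le measurable_const ENNReal.measurable_ofReal), hset,
    Measure.restrict_congr_set Ioi_ae_eq_Ici.symm, lintegral_Ioi_rpow_of_lt (by linarith) ht,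
    ← ENNReal.ofReal_mul (by linarith), show α - 2 + 1 = α - 1 by ring,
    show (1 - α) * (a.toReal ^ (α - 1) / -(α - 1)) = a.toReal ^ (α - 1) by
      rw [neg_sub]; field_simp [show 1 - α ≠ 0 by linarith],
    ← ENNReal.ofReal_rpow_of_pos ht, ofReal_toReal ha']

theorem lintegral_rpow_mul_min_le_add {α κ T : ℝ} (hα : 0 < α) (hακ : α < κ) (hT : 0 < T)
    (M N : ℝ≥0∞) :
    ∫⁻ s in Ioi 0, ENNReal.ofReal (s ^ (α - 2)) *
        min (M * ENNReal.ofReal s) (N * ENNReal.ofReal s ^ (1 - κ))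
      ≤ M * ENNReal.ofReal (T ^ α / α) + N * ENNReal.ofReal (T ^ (α - κ) / (κ - α)) := by
  rw [← Ioc_union_Ioi_eq_Ioi hT.le, lintegral_union measurableSet_Ioi Ioc_disjoint_Ioi_same]
  gcongr
  · calc _ ≤ ∫⁻ s in Ioc 0 T, M * ENNReal.ofReal (s ^ (α - 1)) := by
          refine setLIntegral_mono (by fun_prop) fun s hs => ?_
          calc _ ≤ ENNReal.ofReal (s ^ (α - 2)) * (M * ENNReal.ofReal s) := by
                gcongr; exact min_le_left _ _
            _ = M * ENNReal.ofReal (s ^ (α - 1)) := by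
                rw [mul_left_comm, ← ENNReal.ofReal_mul (Real.rpow_nonneg hs.1.le _),
                  ← Real.rpow_add_one hs.1.ne', show α - 2 + 1 = α - 1 by ring]
      _ = M * ENNReal.ofReal (T ^ α / α) := by
          rw [lintegral_const_mul _ (by fun_prop), lintegral_Ioc_zero_rpow (by linarith) hT,
            sub_add_cancel]
  · calc _ ≤ ∫⁻ s in Ioi T, N * ENNReal.ofReal (s ^ (α - 2 + (1 - κ))) := by
          refine setLIntegral_mono (by fun_prop) fun s hs => ?_
          have hs0 : 0 < s := hT.trans hs
          calc _ ≤ ENNReal.ofReal (s ^ (α - 2)) * (N * ENNReal.ofReal s ^ (1 - κ)) := by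
                gcongr; exact min_le_right _ _
            _ = N * ENNReal.ofReal (s ^ (α - 2 + (1 - κ))) := by
                rw [mul_left_comm, ENNReal.ofReal_rpow_of_pos hs0,
                  ← ENNReal.ofReal_mul (Real.rpow_nonneg hs0.le _), ← Real.rpow_add hs0]
      _ = N * ENNReal.ofReal (T ^ (α - κ) / (κ - α)) := by
          rw [lintegral_const_mul _ (by fun_prop), lintegral_Ioi_rpow_of_lt (by linarith) hT,
            show α - 2 + (1 - κ) + 1 = α - κ by ring, neg_sub]

theorem lintegral_rpow_mul_min_ofReal_le {α κ m n : ℝ} (hα : 0 < α) (hακ : α < κ) (hm : 0 < m)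
    (hn : 0 < n) :
    ∫⁻ s in Ioi 0, ENNReal.ofReal (s ^ (α - 2)) *
        min (ENNReal.ofReal m * ENNReal.ofReal s) (ENNReal.ofReal n * ENNReal.ofReal s ^ (1 - κ))
      ≤ ENNReal.ofReal (1 / α + 1 / (κ - α)) * ENNReal.ofReal m ^ (1 - α / κ) *
        ENNReal.ofReal n ^ (α / κ) := by
  have hκ : 0 < κ := hα.trans hακ
  -- the threshold `T` balances the two bounds: `m * T = n * T ^ (1 - κ)`
  set T := (n / m) ^ κ⁻¹
  have hnear : m * T ^ α = m ^ (1 - α / κ) * n ^ (α / κ) := by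
    rw [← Real.rpow_mul (div_pos hn hm).le, Real.div_rpow hn.le hm.le, Real.rpow_sub hm,
      Real.rpow_one, inv_mul_eq_div]
    field_simp
  have hfar : n * T ^ (α - κ) = m ^ (1 - α / κ) * n ^ (α / κ) := by
    rw [← Real.rpow_mul (by positivity), Real.div_rpow hn.le hm.le,
      show κ⁻¹ * (α - κ) = α / κ - 1 by field_simp, Real.rpow_sub hn, Real.rpow_sub hm,
      Real.rpow_one, Real.rpow_one]
    field_simp
    rw [← Real.rpow_add hm, ← add_div, add_sub_cancel, div_self hκ.ne', Real.rpow_one]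
  have hκα : 0 < κ - α := sub_pos.2 hακ
  have hT : 0 < T := by positivity
  refine (lintegral_rpow_mul_min_le_add hα hακ hT _ _).trans_eq ?_
  rw [← ENNReal.ofReal_mul hm.le, ← ENNReal.ofReal_mul hn.le,
    ← ENNReal.ofReal_add (by positivity) (by positivity), ENNReal.ofReal_rpow_of_pos hm,
    ENNReal.ofReal_rpow_of_pos hn, ← ENNReal.ofReal_mul (by positivity),
    ← ENNReal.ofReal_mul (by positivity)]
  congr 1
  linear_combination hnear / α + hfar / (κ - α)

theorem lintegral_rpow_mul_min_le {α κ : ℝ} (hα : 0 < α) (hακ : α < κ) (M N : ℝ≥0∞) :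
    ∫⁻ s in Ioi 0, ENNReal.ofReal (s ^ (α - 2)) *
        min (M * ENNReal.ofReal s) (N * ENNReal.ofReal s ^ (1 - κ))
      ≤ ENNReal.ofReal (1 / α + 1 / (κ - α)) * M ^ (1 - α / κ) * N ^ (α / κ) := by
  have hθ : 0 < α / κ := div_pos hα (hα.trans hακ)
  have hθ' : 0 < 1 - α / κ := by rw [sub_pos, div_lt_one (hα.trans hακ)]; exact hακ
  have hc : ENNReal.ofReal (1 / α + 1 / (κ - α)) ≠ 0 := by
    have : 0 < κ - α := sub_pos.2 hακ
    positivity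
  rcases eq_or_ne M 0 with rfl | hM0
  · simp
  rcases eq_or_ne N 0 with rfl | hN0
  · simp
  rcases eq_or_ne M ⊤ with rfl | hM
  · rw [top_rpow_of_pos hθ', mul_top hc, top_mul (by simp [rpow_eq_zero_iff, hN0, hθ.le])]
    exact le_top
  rcases eq_or_ne N ⊤ with rfl | hN
  · rw [top_rpow_of_pos hθ, mul_top (mul_ne_zero hc (by simp [rpow_eq_zero_iff, hM0, hM]))]
    exact le_top
  rw [← ofReal_toReal hM, ← ofReal_toReal hN]
  exact lintegral_rpow_mul_min_ofReal_le hα hακ (toReal_pos hM0 hM) (toReal_pos hN0 hN)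

theorem lintegral_lintegral_indicator_sublevel {X : Type*} [MeasurableSpace X] {ν : Measure X}
    [SFinite ν] {φ : X → ℝ≥0∞} (hφ : Measurable φ) {ρ : Measure ℝ} [SFinite ρ] {w : ℝ → ℝ≥0∞}
    (hw : Measurable w) :
    ∫⁻ y, ∫⁻ s, {s | φ y ≤ ENNReal.ofReal s}.indicator w s ∂ρ ∂ν =
      ∫⁻ s, w s * ν {y | φ y ≤ ENNReal.ofReal s} ∂ρ := by
  have hS : MeasurableSet {p : X × ℝ | φ p.1 ≤ ENNReal.ofReal p.2} :=
    measurableSet_le (hφ.comp measurable_fst) (ENNReal.measurable_ofReal.comp measurable_snd)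
  have hmeas :
      Measurable (Function.uncurry fun y s => {s | φ y ≤ ENNReal.ofReal s}.indicator w s) :=
    (hw.comp measurable_snd).indicator hS
  rw [lintegral_lintegral_swap hmeas.aemeasurable]
  refine lintegral_congr fun s => ?_
  rw [← lintegral_indicator_const (measurableSet_le hφ measurable_const)]
  rfl

theorem enorm_potentialT_le {X : Type*} [MetricSpace X] [MeasurableSpace X] [OpensMeasurableSpace X]
    {μ : Measure X} [SFinite μ] {α : ℝ} (hα : α < 1) {f : X → ℝ} (hf : Measurable f) (x : X) :
    ‖potentialT μ α f x‖ₑ ≤ ENNReal.ofReal (1 - α) * ∫⁻ s in Ioi 0, ENNReal.ofReal (s ^ (α - 2)) *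
      μ.withDensity (‖f ·‖ₑ) {y | μ (ball x (dist x y)) ≤ ENNReal.ofReal s} := by
  have hφ : Measurable fun y => μ (ball x (dist x y)) :=
    (Monotone.measurable fun _ _ h => measure_mono (ball_subset_ball h)).comp
      (continuous_const.dist continuous_id).measurable
  have hlayer : ∀ a : ℝ≥0∞, ‖(a ^ (α - 1)).toReal‖ₑ ≤ ENNReal.ofReal (1 - α) * ∫⁻ s in Ioi 0,
      {s | a ≤ ENNReal.ofReal s}.indicator (fun s => ENNReal.ofReal (s ^ (α - 2))) s := by
    intro a
    -- at `a = 0` and `a = ⊤` the `toReal` in `potentialT` makes the integrand vanish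
    rcases eq_or_ne a 0 with rfl | ha
    · simp [zero_rpow_of_neg (by linarith : α - 1 < 0)]
    rcases eq_or_ne a ⊤ with rfl | ha'
    · simp [top_rpow_of_neg (by linarith : α - 1 < 0)]
    rw [← rpow_sub_one_eq_lintegral_indicator hα ha ha']
    exact (Real.enorm_eq_ofReal toReal_nonneg).trans_le ofReal_toReal_le
  calc ‖potentialT μ α f x‖ₑ
      ≤ ∫⁻ y, ‖f y‖ₑ * ‖(μ (ball x (dist x y)) ^ (α - 1)).toReal‖ₑ ∂μ := by
        simp_rw [← enorm_mul]
        exact enorm_integral_le_lintegral_enorm _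
    _ ≤ ∫⁻ y, ‖f y‖ₑ * (ENNReal.ofReal (1 - α) * ∫⁻ s in Ioi 0,
          {s | μ (ball x (dist x y)) ≤ ENNReal.ofReal s}.indicator
            (fun s => ENNReal.ofReal (s ^ (α - 2))) s) ∂μ := by
        gcongr with y
        exact hlayer _
    _ = ENNReal.ofReal (1 - α) * ∫⁻ y, (∫⁻ s in Ioi 0,
          {s | μ (ball x (dist x y)) ≤ ENNReal.ofReal s}.indicator
            (fun s => ENNReal.ofReal (s ^ (α - 2))) s) ∂μ.withDensity (‖f ·‖ₑ) := by
        rw [lintegral_withDensity_eq_lintegral_mul_non_measurable _ hf.enorm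
            (.of_forall fun _ => enorm_lt_top), ← lintegral_const_mul' _ _ ofReal_ne_top]
        simp only [Pi.mul_apply, mul_left_comm]
    _ = _ := by
        rw [lintegral_lintegral_indicator_sublevel hφ (by fun_prop)]

section Balls

variable {X : Type*} [MetricSpace X] [MeasurableSpace X]
  {μ ν : Measure X} {x : X}

theorem measure_ball_le_of_forall_lt {r : ℝ} {c : ℝ≥0∞}
    (h : ∀ t, 0 < t → t < r → ν (ball x t) ≤ c) : ν (ball x r) ≤ c := by
  have hunion : ⋃ n : ℕ, ball x (r - 1 / (n + 1)) = ball x r := by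
    ext y
    simp only [mem_ball, mem_iUnion]
    constructor
    · rintro ⟨n, hn⟩
      linarith [Nat.one_div_pos_of_nat (α := ℝ) (n := n)]
    · intro hy
      obtain ⟨n, hn⟩ := exists_nat_one_div_lt (sub_pos.2 hy)
      exact ⟨n, by linarith⟩
  have hmono : Monotone fun n : ℕ => ball x (r - 1 / (n + 1)) := fun m n hmn =>
    ball_subset_ball (by gcongr)
  rw [← hunion, hmono.measure_iUnion]
  refine iSup_le fun n => ?_
  rcases le_or_gt (r - 1 / (n + 1)) 0 with h0 | h0
  · rw [ball_eq_empty.2 h0, measure_empty]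
    exact zero_le
  · exact h _ h0 (by linarith [Nat.one_div_pos_of_nat (α := ℝ) (n := n)])

theorem measure_compl_ball_eq_zero [OpensMeasurableSpace X] {r : ℝ} (hfin : μ (ball x r) ≠ ⊤)
    (hcont : ContinuousWithinAt (fun t => μ (ball x t)) (Ioi r) r) (hx : ∀ y, dist y x ≤ r) :
    μ (ball x r)ᶜ = 0 := by
  have huniv : μ (ball x r) = μ univ := by
    refine tendsto_nhds_unique hcont (tendsto_const_nhds.congr' ?_)
    filter_upwards [self_mem_nhdsWithin] with t ht
    rw [eq_univ_of_forall fun y => mem_ball.2 ((hx y).trans_lt ht)]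
  rw [measure_compl measurableSet_ball hfin, huniv, tsub_self]

theorem measure_ball_le_of_measure_compl_ball_eq_zero {C : ℝ≥0∞} {q r : ℝ} (hq : 0 ≤ q)
    (hν : ν (ball x r)ᶜ = 0) (h : ∀ t, 0 < t → t < r → ν (ball x t) ≤ C * μ (ball x t) ^ q)
    {t : ℝ} (ht : 0 < t) : ν (ball x t) ≤ C * μ (ball x t) ^ q := by
  rcases lt_or_ge t r with htr | hrt
  · exact h t ht htr
  calc ν (ball x t) ≤ ν univ := measure_mono (subset_univ _)
    _ = ν (ball x r) := (measure_congr (ae_eq_univ.2 hν)).symm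
    _ ≤ C * μ (ball x r) ^ q := measure_ball_le_of_forall_lt fun t' ht' ht'r =>
        (h t' ht' ht'r).trans (by gcongr)
    _ ≤ C * μ (ball x t) ^ q := by gcongr

theorem measure_sublevel_measure_ball_le {C : ℝ≥0∞} {q : ℝ} (hq : 0 ≤ q)
    (hcont : Continuous fun t => μ (ball x t))
    (h : ∀ t, 0 < t → ν (ball x t) ≤ C * μ (ball x t) ^ q) {s : ℝ≥0∞} (hs : s ≠ 0) :
    ν {y | μ (ball x (dist x y)) ≤ s} ≤ C * s ^ q := by
  rcases eq_or_ne C ⊤ with rfl | hC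
  · rw [top_mul (by simp [rpow_eq_zero_iff, hs, hq])]
    exact le_top
  set S := {y | μ (ball x (dist x y)) ≤ s}
  have hS : ∀ t, s < μ (ball x t) → S ⊆ ball x t := fun t ht y hy => by
    rw [mem_ball, dist_comm]
    by_contra! hty
    exact ((measure_mono (ball_subset_ball hty)).trans hy).not_gt ht
  by_cases hbig : ∃ t₀, s < μ (ball x t₀)
  · obtain ⟨t₀, ht₀⟩ := hbig
    -- by the intermediate value theorem, every level `a` just above `s` is `μ (ball x t)`
    have hle : ∀ a ∈ Ioo s (μ (ball x t₀)), ν S ≤ C * a ^ q := by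
      rintro a ⟨hsa, hat₀⟩
      have ht₀0 : 0 ≤ t₀ := by
        by_contra! h0
        simp [ball_eq_empty.2 h0.le] at ht₀
      obtain ⟨t, -, hta : μ (ball x t) = a⟩ := intermediate_value_Icc ht₀0 hcont.continuousOn
        ⟨by simp, hat₀.le⟩
      have ht : 0 < t := by
        by_contra! h0
        simp [← hta, ball_eq_empty.2 h0] at hsa
      calc ν S ≤ ν (ball x t) := measure_mono (hS t (hta ▸ hsa))
        _ ≤ C * μ (ball x t) ^ q := h t ht
        _ = C * a ^ q := by rw [hta]
    have : (nhdsWithin s (Ioi s)).NeBot := nhdsGT_neBot_of_exists_gt ⟨_, ht₀⟩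
    exact ge_of_tendsto (ENNReal.Tendsto.const_mul
      ((ENNReal.continuous_rpow_const.tendsto s).mono_left nhdsWithin_le_nhds) (Or.inr hC))
      (Filter.eventually_of_mem (Ioo_mem_nhdsGT ht₀) hle)
  · push Not at hbig
    have hmono : Monotone fun n : ℕ => ball x (n + 1) := fun m n hmn =>
      ball_subset_ball (by gcongr)
    calc ν S ≤ ν univ := measure_mono (subset_univ _)
      _ = ⨆ n : ℕ, ν (ball x (n + 1)) := by rw [← iUnion_ball_nat_succ x, hmono.measure_iUnion]
      _ ≤ C * s ^ q := iSup_le fun n => (h _ (by positivity)).trans (by gcongr; exact hbig _)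

end Balls

section Bounds

variable {X : Type*} [MetricSpace X] [MeasurableSpace X] {μ : Measure X} {D : ℝ} {x : X} {r : ℝ}

theorem setLIntegral_ball_le_maximalFn {f : X → ℝ} (hr : 0 < r) (hrD : r < D)
    (hμ : μ (ball x r) ≠ ⊤) :
    ∫⁻ y in ball x r, ‖f y‖ₑ ∂μ ≤ maximalFn μ D f x * μ (ball x r) := by
  rcases eq_or_ne (μ (ball x r)) 0 with h0 | h0
  · simp [setLIntegral_measure_zero _ _ h0]
  rw [mul_comm, ← ENNReal.inv_mul_le_iff h0 hμ]
  exact le_iSup₂_of_le r hr (le_iSup_of_le hrD le_rfl)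

theorem setLIntegral_ball_le_morreyNorm {p lam : ℝ} {g : X → ℝ≥0∞} (hp : 1 < p)
    (hg : AEMeasurable g μ) (hr : 0 < r) (hrD : r < D) (hμ : μ (ball x r) ≠ ⊤) :
    ∫⁻ y in ball x r, g y ∂μ ≤ morreyNorm μ D p lam g * μ (ball x r) ^ (1 - (1 - lam) / p) := by
  rcases eq_or_ne (μ (ball x r)) 0 with h0 | h0
  · simp [setLIntegral_measure_zero _ _ h0]
  have hp0 : 0 < p := by linarith
  set N := morreyNorm μ D p lam g
  set m := μ (ball x r)
  have hN : (m ^ (-lam) * ∫⁻ y in ball x r, g y ^ p ∂μ) ^ (1 / p) ≤ N :=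
    le_iSup_of_le x (le_iSup₂_of_le r hr (le_iSup_of_le hrD le_rfl))
  have hLp : (∫⁻ y in ball x r, g y ^ p ∂μ) ^ (1 / p) ≤ m ^ (lam / p) * N := by
    calc (∫⁻ y in ball x r, g y ^ p ∂μ) ^ (1 / p)
        = (m ^ lam * (m ^ (-lam) * ∫⁻ y in ball x r, g y ^ p ∂μ)) ^ (1 / p) := by
          rw [← mul_assoc, ← ENNReal.rpow_add _ _ h0 hμ, add_neg_cancel, ENNReal.rpow_zero,
            one_mul]
      _ ≤ m ^ (lam / p) * N := by
          rw [ENNReal.mul_rpow_of_nonneg _ _ (by positivity), ← ENNReal.rpow_mul, mul_one_div]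
          gcongr
  have hHolder : ∫⁻ y in ball x r, g y ∂μ ≤
      (∫⁻ y in ball x r, g y ^ p ∂μ) ^ (1 / p) * m ^ ((p - 1) / p) := by
    have h := ENNReal.lintegral_mul_le_Lp_mul_Lq (μ.restrict (ball x r))
      (Real.HolderConjugate.conjExponent hp) hg.restrict (aemeasurable_const (b := (1 : ℝ≥0∞)))
    simpa [Real.conjExponent, Measure.restrict_apply_univ, one_div_div, sub_div' hp0.ne'] using h
  calc ∫⁻ y in ball x r, g y ∂μ ≤ m ^ (lam / p) * N * m ^ ((p - 1) / p) := hHolder.trans (by gcongr)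
    _ = N * m ^ (1 - (1 - lam) / p) := by
        rw [mul_comm _ N, mul_assoc, ← ENNReal.rpow_add _ _ h0 hμ]
        congr 2
        field_simp
        ring

end Bounds

theorem dist_le_of_ediam_univ_le {X : Type*} [MetricSpace X] {D : ℝ} (hD : 0 ≤ D)
    (h : Metric.ediam (univ : Set X) ≤ ENNReal.ofReal D) (y z : X) : dist y z ≤ D := by
  rw [← ENNReal.ofReal_le_ofReal_iff hD, ← edist_dist]
  exact (Metric.edist_le_ediam_of_mem (mem_univ y) (mem_univ z)).trans h

section Hedberg

variable {X : Type*} [MetricSpace X] [MeasurableSpace X] [OpensMeasurableSpace X]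
  {μ : Measure X} [IsFiniteMeasure μ] {D : ℝ} {x : X} {p lam : ℝ} {f : X → ℝ}

theorem withDensity_sublevel_le_min (hdist : ∀ y, dist y x ≤ D)
    (hcont : Continuous fun t => μ (ball x t)) (hp : 1 < p) (hlam : 0 ≤ lam) (hf : Measurable f)
    {s : ℝ} (hs : 0 < s) :
    μ.withDensity (‖f ·‖ₑ) {y | μ (ball x (dist x y)) ≤ ENNReal.ofReal s} ≤
      min (maximalFn μ D f x * ENNReal.ofReal s)
        (morreyNorm μ D p lam (‖f ·‖ₑ) * ENNReal.ofReal s ^ (1 - (1 - lam) / p)) := by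
  have hq : 0 ≤ 1 - (1 - lam) / p := by
    rw [sub_nonneg, div_le_one (by linarith)]
    linarith
  have hν : μ.withDensity (‖f ·‖ₑ) (ball x D)ᶜ = 0 := withDensity_absolutelyContinuous _ _ <|
    measure_compl_ball_eq_zero (measure_ne_top μ _) hcont.continuousWithinAt hdist
  have hs0 : ENNReal.ofReal s ≠ 0 := (ENNReal.ofReal_pos.2 hs).ne'
  refine le_min ?_ ?_
  · refine (measure_sublevel_measure_ball_le zero_le_one hcont (fun t ht => ?_) hs0).trans_eq
      (by rw [ENNReal.rpow_one])
    refine measure_ball_le_of_measure_compl_ball_eq_zero zero_le_one hν (fun t ht htD => ?_) ht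
    rw [withDensity_apply _ measurableSet_ball, ENNReal.rpow_one]
    exact setLIntegral_ball_le_maximalFn ht htD (measure_ne_top μ _)
  · refine measure_sublevel_measure_ball_le hq hcont (fun t ht => ?_) hs0
    refine measure_ball_le_of_measure_compl_ball_eq_zero hq hν (fun t ht htD => ?_) ht
    rw [withDensity_apply _ measurableSet_ball]
    exact setLIntegral_ball_le_morreyNorm hp hf.enorm.aemeasurable ht htD (measure_ne_top μ _)

theorem enorm_potentialT_le_maximalFn_rpow_mul_morreyNorm_rpow (hdist : ∀ y, dist y x ≤ D)
    (hcont : Continuous fun t => μ (ball x t)) {α : ℝ} (hα : 0 < α) (hp : 1 < p)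
    (hlam : 0 ≤ lam) (hακ : α < (1 - lam) / p) (hf : Measurable f) :
    ‖potentialT μ α f x‖ₑ ≤ ENNReal.ofReal (1 / α + p / (1 - lam - α * p)) *
      maximalFn μ D f x ^ (1 - p * α / (1 - lam)) *
      morreyNorm μ D p lam (‖f ·‖ₑ) ^ (p * α / (1 - lam)) := by
  have hα1 : α < 1 := hακ.trans_le (by rw [div_le_one (by linarith)]; linarith)
  have hexp : α / ((1 - lam) / p) = p * α / (1 - lam) := by
    rw [div_div_eq_mul_div, mul_comm]
  have hconst : 1 / ((1 - lam) / p - α) = p / (1 - lam - α * p) := by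
    rw [div_sub' (by linarith), one_div_div, mul_comm α p]
  calc ‖potentialT μ α f x‖ₑ
      ≤ ENNReal.ofReal (1 - α) * ∫⁻ s in Ioi 0, ENNReal.ofReal (s ^ (α - 2)) *
          μ.withDensity (‖f ·‖ₑ) {y | μ (ball x (dist x y)) ≤ ENNReal.ofReal s} :=
        enorm_potentialT_le hα1 hf x
    _ ≤ 1 * (ENNReal.ofReal (1 / α + 1 / ((1 - lam) / p - α)) *
          maximalFn μ D f x ^ (1 - α / ((1 - lam) / p)) *
          morreyNorm μ D p lam (‖f ·‖ₑ) ^ (α / ((1 - lam) / p))) := by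
        gcongr
        · exact ENNReal.ofReal_le_one.2 (by linarith)
        · refine (setLIntegral_mono (by fun_prop) fun s hs => ?_).trans
            (lintegral_rpow_mul_min_le hα hακ _ _)
          gcongr
          exact withDensity_sublevel_le_min hdist hcont hp hlam hf hs
    _ = _ := by rw [one_mul, hexp, hconst]

end Hedberg

theorem hedberg_pointwise_estimate_potentialT_general
    {X : Type*} [MetricSpace X] [MeasurableSpace X] [BorelSpace X]
    (μ : Measure X) (D : ℝ) (hD : 0 < D)
    (hdiam : EMetric.diam (Set.univ : Set X) = ENNReal.ofReal D)
    (hball : ∀ (x : X) (r : ℝ), 0 < r → 0 < μ (ball x r) ∧ μ (ball x r) < ⊤)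
    (hcont : ∀ x : X, Continuous fun t : ℝ => μ (ball x t)) :
    ∃ c : ℝ, 0 < c ∧ ∀ α : ℝ, 0 < α → ∃ Cα : ℝ, 0 < Cα ∧
      ∀ p lam : ℝ, 1 < p → 0 ≤ lam → lam < 1 → α < (1 - lam) / p →
      ∀ f : X → ℝ, Measurable f →
        morreyNorm μ D p lam (fun y => (‖f y‖₊ : ℝ≥0∞)) < ⊤ →
      ∀ x : X,
        (‖potentialT μ α f x‖₊ : ℝ≥0∞) ≤
          ENNReal.ofReal (c * (Cα + p / (1 - lam - α * p))) *
            (maximalFn μ D f x) ^ (1 - p * α / (1 - lam)) *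
            (morreyNorm μ D p lam (fun y => (‖f y‖₊ : ℝ≥0∞)))
              ^ (p * α / (1 - lam)) := by
  refine ⟨1, one_pos, fun α hα => ⟨1 / α, by positivity, ?_⟩⟩
  intro p lam hp hlam _ hακ f hf _ x
  have hdist : ∀ y, dist y x ≤ D := fun y => dist_le_of_ediam_univ_le hD.le hdiam.le y x
  have : IsFiniteMeasure μ := ⟨by
    rw [← eq_univ_of_forall fun y => mem_ball.2 ((hdist y).trans_lt (lt_add_one D))]
    exact (hball x _ (by linarith)).2⟩
  rw [one_mul]
  exact enorm_potentialT_le_maximalFn_rpow_mul_morreyNorm_rpow hdist (hcont x) hα hp hlam hακ hf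

/-- Hedberg-type pointwise estimate for the potential operator `T_α` in terms of
the Hardy–Littlewood maximal function and the Morrey norm. -/
theorem hedberg_pointwise_estimate_potentialT
    {X : Type*} [MetricSpace X] [MeasurableSpace X] [BorelSpace X]
    (μ : Measure X) (D : ℝ) (hD : 0 < D)
    (hdiam : EMetric.diam (Set.univ : Set X) = ENNReal.ofReal D)
    (hball : ∀ (x : X) (r : ℝ), 0 < r → 0 < μ (ball x r) ∧ μ (ball x r) < ⊤)
    (Cμ : ℝ≥0∞) (hCμ : Cμ < ⊤)
    (hdouble : ∀ (x : X) (r : ℝ), 0 < r → μ (ball x (2 * r)) ≤ Cμ * μ (ball x r))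
    (hatom : ∀ x : X, μ {x} = 0)
    (hcont : ∀ x : X, Continuous fun t : ℝ => μ (ball x t))
    (hannuli : ∀ (x : X) (r R : ℝ), 0 < r → r < R → R < D →
      (ball x R \ ball x r).Nonempty) :
    ∃ c : ℝ, 0 < c ∧ ∀ α : ℝ, 0 < α → ∃ Cα : ℝ, 0 < Cα ∧
      ∀ p lam : ℝ, 1 < p → 0 ≤ lam → lam < 1 → α < (1 - lam) / p →
      ∀ f : X → ℝ, Measurable f →
        morreyNorm μ D p lam (fun y => (‖f y‖₊ : ℝ≥0∞)) < ⊤ →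
      ∀ x : X,
        (‖potentialT μ α f x‖₊ : ℝ≥0∞) ≤
          ENNReal.ofReal (c * (Cα + p / (1 - lam - α * p))) *
            (maximalFn μ D f x) ^ (1 - p * α / (1 - lam)) *
            (morreyNorm μ D p lam (fun y => (‖f y‖₊ : ℝ≥0∞)))
              ^ (p * α / (1 - lam)) :=
  hedberg_pointwise_estimate_potentialT_general μ D hD hdiam hball hcont
end
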